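/- Let D be a nonempty finite set of forbidden patterns such that no pattern in D contains the symbol 0. Then for every n ≥ 1 one has n · cap(D) ≤ log₂ δ_n(D) ≤ (n + 1) · cap(D). -/

import Mathlib

/-- The integer value of a binary symbol. -/
def boolToInt (b : Bool) : ℤ := if b then 1 else 0

/-- Componentwise difference of two binary words, a word over `{-1, 0, +1}`. -/
def diffWord (u v : List Bool) : List ℤ :=
  List.zipWith (fun a b => boolToInt a - boolToInt b) u v

/-- A forbidden pattern: a nonempty finite word over the alphabet `{-1, 0, +1}`. -/
def IsPattern (p : List ℤ) : Prop :=
  p ≠ [] ∧ ∀ x ∈ p, x = -1 ∨ x = 0 ∨ x = 1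

/-- A code `C` of binary words avoids the forbidden set `D` if no difference of two
distinct code words contains a pattern of `D` as a contiguous subword (factor). -/
def AvoidsCode (D : Finset (List ℤ)) (C : Finset (List Bool)) : Prop :=
  ∀ u ∈ C, ∀ v ∈ C, u ≠ v → ∀ p ∈ D, ¬ p <:+: diffWord u v

/-- `delta D n` : the maximal cardinality of a code of binary words of length `n`
avoiding the forbidden set `D`. -/
noncomputable def delta (D : Finset (List ℤ)) (n : ℕ) : ℕ :=
  sSup {k : ℕ | ∃ C : Finset (List Bool),
    (∀ u ∈ C, u.length = n) ∧ AvoidsCode D C ∧ C.card = k}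

/-- The capacity of a set of forbidden difference patterns. -/
noncomputable def cap (D : Finset (List ℤ)) : ℝ :=
  Filter.limsup (fun n : ℕ => Real.logb 2 (delta D n) / n) Filter.atTop

/-! `n ↦ log₂ δ_n(D)` is subadditive, because a code of length `m + n` injects into the product
of its prefix code and its suffix code. If no pattern contains `0`, it is also superadditive up
to one extra symbol: concatenating two codes with a separator `0` gives a code of length
`m + n + 1`, since a zero-free pattern in the difference cannot straddle the separator column,
where the difference is `0`. By Fekete's lemma `log₂ δ_n / n` converges to
`cap D = inf_n log₂ δ_n / n`, which is the first inequality; iterating the superadditivity gives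
`k · log₂ δ_n ≤ log₂ δ_{(n+1)k}`, and letting `k → ∞` gives the second. -/

open Filter Topology

theorem List.infix_or_infix_of_infix_append_cons {α : Type*} {p l₁ l₂ : List α} {x : α}
    (h : p <:+: l₁ ++ x :: l₂) (hx : x ∉ p) : p <:+: l₁ ∨ p <:+: l₂ := by
  rcases List.infix_append_iff.mp h with h | h | ⟨s, t, rfl, hs, ht⟩
  · exact .inl h
  · rcases List.infix_cons_iff.mp h with h | h
    · rcases List.prefix_cons_iff.mp h with rfl | ⟨t, rfl, -⟩
      · exact .inl List.nil_infix
      · exact absurd List.mem_cons_self hx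
    · exact .inr h
  · rcases List.prefix_cons_iff.mp ht with rfl | ⟨t', rfl, -⟩
    · exact .inl (by simpa using hs.isInfix)
    · exact absurd (List.mem_append_right s List.mem_cons_self) hx

theorem diffWord_take (u v : List Bool) (m : ℕ) :
    diffWord (u.take m) (v.take m) = (diffWord u v).take m :=
  List.take_zipWith.symm

theorem diffWord_drop (u v : List Bool) (m : ℕ) :
    diffWord (u.drop m) (v.drop m) = (diffWord u v).drop m :=
  List.drop_zipWith.symm

theorem diffWord_append_false_cons {u u' : List Bool} (v v' : List Bool)
    (h : u.length = u'.length) :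
    diffWord (u ++ false :: v) (u' ++ false :: v') = diffWord u u' ++ 0 :: diffWord v v' := by
  simp [diffWord, List.zipWith_append h, boolToInt]

theorem not_infix_diffWord_self {p : List ℤ} (hp : p ≠ []) (h0 : (0 : ℤ) ∉ p) (u : List Bool) :
    ¬ p <:+: diffWord u u := by
  intro h
  obtain ⟨x, hx⟩ := List.exists_mem_of_ne_nil p hp
  have hx0 := h.subset hx
  simp only [diffWord, List.zipWith_self, sub_self, List.map_const', List.mem_replicate] at hx0
  exact h0 (hx0.2 ▸ hx)

theorem AvoidsCode.singleton (D : Finset (List ℤ)) (u : List Bool) : AvoidsCode D {u} := by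
  simp [AvoidsCode]

section Codes

variable {D : Finset (List ℤ)}

theorem AvoidsCode.image {C : Finset (List Bool)} (hC : AvoidsCode D C)
    (f : List Bool → List Bool) (hf : ∀ u v, diffWord (f u) (f v) <:+: diffWord u v) :
    AvoidsCode D (C.image f) := by
  simp only [AvoidsCode, Finset.forall_mem_image]
  intro u hu v hv hne p hp hpf
  exact hC u hu v hv (fun h => hne (h ▸ rfl)) p hp (hpf.trans (hf u v))

theorem AvoidsCode.not_infix_diffWord {C : Finset (List Bool)} (hC : AvoidsCode D C)
    {p : List ℤ} (hp : p ∈ D) (hpne : p ≠ []) (h0 : (0 : ℤ) ∉ p)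
    {u v : List Bool} (hu : u ∈ C) (hv : v ∈ C) : ¬ p <:+: diffWord u v := by
  rcases eq_or_ne u v with rfl | hne
  · exact not_infix_diffWord_self hpne h0 u
  · exact hC u hu v hv hne p hp

theorem AvoidsCode.image_append_false_cons (hD : ∀ p ∈ D, p ≠ [] ∧ (0 : ℤ) ∉ p)
    {C₁ C₂ : Finset (List Bool)} (hC₁ : AvoidsCode D C₁) (hC₂ : AvoidsCode D C₂)
    (hlen : ∀ u ∈ C₁, ∀ u' ∈ C₁, u.length = u'.length) :
    AvoidsCode D ((C₁ ×ˢ C₂).image fun q => q.1 ++ false :: q.2) := by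
  simp only [AvoidsCode, Finset.forall_mem_image, Finset.mem_product, Prod.forall]
  rintro u v ⟨hu, hv⟩ u' v' ⟨hu', hv'⟩ - p hp hpuv
  rw [diffWord_append_false_cons v v' (hlen u hu u' hu')] at hpuv
  rcases List.infix_or_infix_of_infix_append_cons hpuv (hD p hp).2 with h | h
  · exact hC₁.not_infix_diffWord hp (hD p hp).1 (hD p hp).2 hu hu' h
  · exact hC₂.not_infix_diffWord hp (hD p hp).1 (hD p hp).2 hv hv' h

end Codes

section Delta

variable (D : Finset (List ℤ))

theorem bddAbove_card_codes (n : ℕ) :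
    BddAbove {k : ℕ | ∃ C : Finset (List Bool),
      (∀ u ∈ C, u.length = n) ∧ AvoidsCode D C ∧ C.card = k} := by
  refine ⟨(List.finite_length_eq Bool n).toFinset.card, ?_⟩
  rintro k ⟨C, hlen, -, rfl⟩
  exact Finset.card_le_card fun u hu => by simpa using hlen u hu

theorem card_le_delta {n : ℕ} {C : Finset (List Bool)} (hlen : ∀ u ∈ C, u.length = n)
    (hC : AvoidsCode D C) : C.card ≤ delta D n :=
  le_csSup (bddAbove_card_codes D n) ⟨C, hlen, hC, rfl⟩

theorem exists_code_card_eq_delta (n : ℕ) :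
    ∃ C : Finset (List Bool), (∀ u ∈ C, u.length = n) ∧ AvoidsCode D C ∧ C.card = delta D n := by
  refine Nat.sSup_mem ?_ (bddAbove_card_codes D n)
  exact ⟨1, {List.replicate n false}, by simp, AvoidsCode.singleton D _, rfl⟩

theorem one_le_delta (n : ℕ) : 1 ≤ delta D n :=
  card_le_delta D (C := {List.replicate n false}) (by simp) (AvoidsCode.singleton D _)

theorem delta_add_le_mul (m n : ℕ) : delta D (m + n) ≤ delta D m * delta D n := by
  obtain ⟨C, hlen, hC, hcard⟩ := exists_code_card_eq_delta D (m + n)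
  have hprefix : AvoidsCode D (C.image (List.take m)) :=
    hC.image _ fun u v => diffWord_take u v m ▸ (List.take_prefix m _).isInfix
  have hsuffix : AvoidsCode D (C.image (List.drop m)) :=
    hC.image _ fun u v => diffWord_drop u v m ▸ (List.drop_suffix m _).isInfix
  calc delta D (m + n) = C.card := hcard.symm
    _ ≤ (C.image (List.take m) ×ˢ C.image (List.drop m)).card := by
      refine Finset.card_le_card_of_injOn (fun u => (u.take m, u.drop m))
        (fun u hu => Finset.mem_product.2 ⟨Finset.mem_image_of_mem _ hu,
          Finset.mem_image_of_mem _ hu⟩) ?_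
      intro u _ v _ h
      simp only [Prod.mk.injEq] at h
      rw [← List.take_append_drop m u, ← List.take_append_drop m v,
        h.1, h.2]
    _ ≤ delta D m * delta D n := by
      rw [Finset.card_product]
      refine Nat.mul_le_mul (card_le_delta D ?_ hprefix) (card_le_delta D ?_ hsuffix) <;>
        simp +contextual [hlen]

theorem delta_mul_le_delta_add_add_one (hD : ∀ p ∈ D, p ≠ [] ∧ (0 : ℤ) ∉ p) (m n : ℕ) :
    delta D m * delta D n ≤ delta D (m + n + 1) := by
  obtain ⟨C₁, hlen₁, hC₁, hcard₁⟩ := exists_code_card_eq_delta D m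
  obtain ⟨C₂, hlen₂, hC₂, hcard₂⟩ := exists_code_card_eq_delta D n
  have hlen : ∀ u ∈ C₁, ∀ u' ∈ C₁, u.length = u'.length := fun u hu u' hu' => by
    rw [hlen₁ u hu, hlen₁ u' hu']
  have hinj : Set.InjOn (fun q : List Bool × List Bool => q.1 ++ false :: q.2) ↑(C₁ ×ˢ C₂) := by
    rintro ⟨u, v⟩ huv ⟨u', v'⟩ huv' h
    simp only [Finset.coe_product, Set.mem_prod, Finset.mem_coe] at huv huv'
    obtain ⟨rfl, hv⟩ := List.append_inj h (hlen u huv.1 u' huv'.1)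
    simpa using hv
  calc delta D m * delta D n = ((C₁ ×ˢ C₂).image fun q => q.1 ++ false :: q.2).card := by
        rw [Finset.card_image_of_injOn hinj, Finset.card_product, hcard₁, hcard₂]
    _ ≤ delta D (m + n + 1) := by
      refine card_le_delta D ?_ (hC₁.image_append_false_cons hD hC₂ hlen)
      simp only [Finset.mem_image, Finset.mem_product]
      rintro _ ⟨⟨u, v⟩, ⟨hu, hv⟩, rfl⟩
      simp [hlen₁ u hu, hlen₂ v hv]
      omega

theorem logb_delta_nonneg (n : ℕ) : 0 ≤ Real.logb 2 (delta D n) :=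
  Real.logb_nonneg one_lt_two (by exact_mod_cast one_le_delta D n)

theorem subadditive_logb_delta : Subadditive fun n => Real.logb 2 (delta D n) := by
  intro m n
  have hm : (0 : ℝ) < delta D m := by exact_mod_cast one_le_delta D m
  have hn : (0 : ℝ) < delta D n := by exact_mod_cast one_le_delta D n
  rw [← Real.logb_mul hm.ne' hn.ne']
  exact Real.logb_le_logb_of_le one_lt_two (by exact_mod_cast one_le_delta D _)
    (by exact_mod_cast delta_add_le_mul D m n)

theorem logb_delta_add_le (hD : ∀ p ∈ D, p ≠ [] ∧ (0 : ℤ) ∉ p) (m n : ℕ) :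
    Real.logb 2 (delta D m) + Real.logb 2 (delta D n) ≤ Real.logb 2 (delta D (m + n + 1)) := by
  have hm : (0 : ℝ) < delta D m := by exact_mod_cast one_le_delta D m
  have hn : (0 : ℝ) < delta D n := by exact_mod_cast one_le_delta D n
  rw [← Real.logb_mul hm.ne' hn.ne']
  exact Real.logb_le_logb_of_le one_lt_two (by positivity)
    (by exact_mod_cast delta_mul_le_delta_add_add_one D hD m n)

end Delta

theorem cast_mul_le_apply_succ_mul {u : ℕ → ℝ} (hu : ∀ m n, u m + u n ≤ u (m + n + 1))
    (h0 : 0 ≤ u 0) (n k : ℕ) : k * u n ≤ u ((n + 1) * k) := by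
  induction k with
  | zero => simpa using h0
  | succ k ih =>
    calc ((k + 1 : ℕ) : ℝ) * u n = k * u n + u n := by push_cast; ring
      _ ≤ u ((n + 1) * k) + u n := by linarith
      _ ≤ u ((n + 1) * (k + 1)) := by
        convert hu ((n + 1) * k) n using 2; ring

theorem div_succ_le_of_tendsto {u : ℕ → ℝ} {L : ℝ} (hu : ∀ m n, u m + u n ≤ u (m + n + 1))
    (h0 : 0 ≤ u 0) (hL : Tendsto (fun n => u n / n) atTop (𝓝 L)) (n : ℕ) :
    u n / (n + 1) ≤ L := by
  have hmul : Tendsto (fun k => (n + 1) * k) atTop atTop :=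
    tendsto_atTop_mono (fun k => Nat.le_mul_of_pos_left k n.succ_pos) tendsto_id
  refine ge_of_tendsto (hL.comp hmul) (eventually_ge_atTop 1 |>.mono fun k hk => ?_)
  have hk : (0 : ℝ) < k := by exact_mod_cast hk
  calc u n / (n + 1) = k * u n / ((n + 1) * k) := by field_simp
    _ ≤ u ((n + 1) * k) / ((n + 1) * k) := by
      gcongr
      exact cast_mul_le_apply_succ_mul hu h0 n k
    _ = _ := by simp

theorem capacity_bounds_no_zero_general (D : Finset (List ℤ))
    (hD : ∀ p ∈ D, p ≠ [] ∧ ∀ x ∈ p, x = -1 ∨ x = 1)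
    (n : ℕ) (hn : 1 ≤ n) :
    (n : ℝ) * cap D ≤ Real.logb 2 (delta D n) ∧
    Real.logb 2 (delta D n) ≤ ((n : ℝ) + 1) * cap D := by
  have hD0 : ∀ p ∈ D, p ≠ [] ∧ (0 : ℤ) ∉ p := fun p hp =>
    ⟨(hD p hp).1, fun h0 => by rcases (hD p hp).2 0 h0 with h | h <;> norm_num at h⟩
  have hsub := subadditive_logb_delta D
  have hbdd : BddBelow (Set.range fun n => Real.logb 2 (delta D n) / n) :=
    ⟨0, by rintro _ ⟨m, rfl⟩; exact div_nonneg (logb_delta_nonneg D m) m.cast_nonneg⟩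
  have hlim := hsub.tendsto_lim hbdd
  have hcap : cap D = hsub.lim := hlim.limsup_eq
  have hn' : (0 : ℝ) < n := by exact_mod_cast hn
  constructor
  · rw [hcap, mul_comm, ← le_div_iff₀ hn']
    exact hsub.lim_le_div hbdd (by omega)
  · rw [mul_comm, ← div_le_iff₀ (by positivity), hcap]
    exact div_succ_le_of_tendsto (logb_delta_add_le D hD0) (logb_delta_nonneg D 0) hlim n

/-- if no pattern in `D` contains the symbol `0`, then
`n · cap(D) ≤ log₂ δ_n(D) ≤ (n+1) · cap(D)`. -/
theorem capacity_bounds_no_zero (D : Finset (List ℤ)) (hDne : D.Nonempty)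
    (hD : ∀ p ∈ D, p ≠ [] ∧ ∀ x ∈ p, x = -1 ∨ x = 1)
    (n : ℕ) (hn : 1 ≤ n) :
    (n : ℝ) * cap D ≤ Real.logb 2 (delta D n) ∧
    Real.logb 2 (delta D n) ≤ ((n : ℝ) + 1) * cap D :=
  capacity_bounds_no_zero_general D hD n hn
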